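/- arXiv:2007.02693 — 3 statements merged into one kernel-verified Lean document; each statement's English description precedes it below -/
import Mathlib

section
/- Let L_T : ℝ^n × ℝ^m → ℝ be twice continuously differentiable with G(W, φ) the gradient of W ↦ L_T(W, φ), let W* : ℝ^m → ℝ^n be differentiable at φ̂ with G(W*(φ), φ) = 0 for all φ in a neighborhood of φ̂, let the Hessian H := D_W G(W*(φ̂), φ̂) be invertible, and let L_A : ℝ^n → ℝ be differentiable at W*(φ̂). Then φ ↦ L_A(W*(φ)) is differentiable at φ̂ and its derivative applied to any v ∈ ℝ^m equals −⟨∇L_A(W*(φ̂)), H⁻¹ (D_φ G(W*(φ̂), φ̂) v)⟩, where D_φ G is the partial derivative of G in φ and ⟨·,·⟩ is the Euclidean inner product. -/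
/-!
Differentiating the stationarity condition `G (W* φ, φ) = 0` at `φ₀` by the chain rule gives
`H ∘ DW* + D_φ G = 0`, so `DW* = -H⁻¹ ∘ D_φ G`. Composing with `D L_A = ⟪∇L_A, ·⟫` yields the
formula. Twice differentiability of `L_T` is what makes `G` jointly differentiable, which the
chain rule needs.
-/

open scoped RealInnerProductSpace
open ContinuousLinearMap Topology

section ImplicitDifferentiation

variable {𝕜 E P F : Type*} [NontriviallyNormedField 𝕜]
  [NormedAddCommGroup E] [NormedSpace 𝕜 E] [NormedAddCommGroup P] [NormedSpace 𝕜 P]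
  [NormedAddCommGroup F] [NormedSpace 𝕜 F]
  {f : E → P → F} {w : P → E} {p₀ : P}

theorem fderiv_left_comp_add_fderiv_right_eq_zero
    (hf : DifferentiableAt 𝕜 (Function.uncurry f) (w p₀, p₀)) (hw : DifferentiableAt 𝕜 w p₀)
    (hzero : ∀ᶠ p in 𝓝 p₀, f (w p) p = 0) :
    fderiv 𝕜 (fun x => f x p₀) (w p₀) ∘L fderiv 𝕜 w p₀ +
      fderiv 𝕜 (fun p => f (w p₀) p) p₀ = 0 := by
  set D := fderiv 𝕜 (Function.uncurry f) (w p₀, p₀)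
  have hleft : HasFDerivAt (fun x => f x p₀) (D ∘L inl 𝕜 E P) (w p₀) :=
    hf.hasFDerivAt.comp (f := fun x => (x, p₀)) _ (hasFDerivAt_prodMk_left _ _)
  have hright : HasFDerivAt (fun p => f (w p₀) p) (D ∘L inr 𝕜 E P) p₀ :=
    hf.hasFDerivAt.comp (f := fun p => (w p₀, p)) _ (hasFDerivAt_prodMk_right _ _)
  have htotal : HasFDerivAt (fun p => f (w p) p) (D ∘L (fderiv 𝕜 w p₀).prod (.id 𝕜 P)) p₀ :=
    hf.hasFDerivAt.comp (f := fun p => (w p, p)) p₀ (hw.hasFDerivAt.prodMk (hasFDerivAt_id p₀))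
  have hconst : HasFDerivAt (fun p => f (w p) p) (0 : P →L[𝕜] F) p₀ :=
    (hasFDerivAt_const (0 : F) p₀).congr_of_eventuallyEq hzero
  rw [hleft.fderiv, hright.fderiv]
  ext v
  simpa [← map_add] using congr($(htotal.unique hconst) v)

theorem fderiv_eq_neg_symm_comp_fderiv_right
    (hf : DifferentiableAt 𝕜 (Function.uncurry f) (w p₀, p₀)) (hw : DifferentiableAt 𝕜 w p₀)
    (hzero : ∀ᶠ p in 𝓝 p₀, f (w p) p = 0) (H : E ≃L[𝕜] F)
    (hH : (H : E →L[𝕜] F) = fderiv 𝕜 (fun x => f x p₀) (w p₀)) :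
    fderiv 𝕜 w p₀ = -(H.symm : F →L[𝕜] E) ∘L fderiv 𝕜 (fun p => f (w p₀) p) p₀ := by
  have key := fderiv_left_comp_add_fderiv_right_eq_zero hf hw hzero
  rw [← hH, ← eq_neg_iff_add_eq_zero] at key
  ext v
  simpa using congr(H.symm ($key v))

end ImplicitDifferentiation

section PartialGradient

variable {E P : Type*} [NormedAddCommGroup E] [InnerProductSpace ℝ E] [CompleteSpace E]
  [NormedAddCommGroup P] [NormedSpace ℝ P] {f : E × P → ℝ}

theorem gradient_apply_prodMk_left {x : E} {p : P} (hf : DifferentiableAt ℝ f (x, p)) :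
    gradient (fun x' => f (x', p)) x =
      (InnerProductSpace.toDual ℝ E).symm (fderiv ℝ f (x, p) ∘L inl ℝ E P) :=
  (hf.hasFDerivAt.comp (f := fun x' => (x', p)) x
    (hasFDerivAt_prodMk_left x p)).hasGradientAt.gradient

theorem ContDiff.differentiable_gradient_apply_prodMk_left (hf : ContDiff ℝ 2 f) :
    Differentiable ℝ (fun q : E × P => gradient (fun x => f (x, q.2)) q.1) := by
  have hf' : Differentiable ℝ (fderiv ℝ f) :=
    (hf.fderiv_right (m := 1) le_rfl).differentiable one_ne_zero
  have hpartial : Differentiable ℝ (fun q : E × P => fderiv ℝ f q ∘L inl ℝ E P) :=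
    ((compL ℝ E (E × P) ℝ).flip (inl ℝ E P)).differentiable.comp hf'
  have hgrad : (fun q : E × P => gradient (fun x => f (x, q.2)) q.1) =
      fun q => (InnerProductSpace.toDual ℝ E).symm (fderiv ℝ f q ∘L inl ℝ E P) :=
    funext fun q => gradient_apply_prodMk_left (hf.differentiable two_ne_zero q)
  rw [hgrad]
  exact (InnerProductSpace.toDual ℝ E).symm.toContinuousLinearEquiv.differentiable.comp hpartial

end PartialGradient

/-- Hypergradient formula: with `G` the `W`-gradient of the training
loss, `W*` the stationary-point map and `H` the (invertible) Hessian in `W`,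
`φ ↦ L_A(W*(φ))` is differentiable at `φ₀` and its derivative at `v` equals
`−⟨∇L_A(W*(φ₀)), H⁻¹ (D_φ G(W*(φ₀), φ₀) v)⟩`. -/
theorem stmt_2 (n m : ℕ)
    (LT : EuclideanSpace ℝ (Fin n) × EuclideanSpace ℝ (Fin m) → ℝ)
    (hLT : ContDiff ℝ 2 LT)
    (G : EuclideanSpace ℝ (Fin n) → EuclideanSpace ℝ (Fin m) → EuclideanSpace ℝ (Fin n))
    (hG : ∀ W φ, G W φ = gradient (fun W' => LT (W', φ)) W)
    (Wstar : EuclideanSpace ℝ (Fin m) → EuclideanSpace ℝ (Fin n))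
    (phi0 : EuclideanSpace ℝ (Fin m))
    (hWdiff : DifferentiableAt ℝ Wstar phi0)
    (hstat : ∀ᶠ φ in nhds phi0, G (Wstar φ) φ = 0)
    (H : EuclideanSpace ℝ (Fin n) ≃L[ℝ] EuclideanSpace ℝ (Fin n))
    (hH : (H : EuclideanSpace ℝ (Fin n) →L[ℝ] EuclideanSpace ℝ (Fin n)) =
      fderiv ℝ (fun W => G W phi0) (Wstar phi0))
    (LA : EuclideanSpace ℝ (Fin n) → ℝ)
    (hLA : DifferentiableAt ℝ LA (Wstar phi0)) :
    DifferentiableAt ℝ (fun φ => LA (Wstar φ)) phi0 ∧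
    ∀ v : EuclideanSpace ℝ (Fin m),
      fderiv ℝ (fun φ => LA (Wstar φ)) phi0 v =
        - ⟪gradient LA (Wstar phi0),
            H.symm (fderiv ℝ (fun φ => G (Wstar phi0) φ) phi0 v)⟫ := by
  have hGdiff : Differentiable ℝ (Function.uncurry G) := by
    have hGeq : Function.uncurry G = fun q => gradient (fun W' => LT (W', q.2)) q.1 :=
      funext fun q => hG q.1 q.2
    rw [hGeq]
    exact hLT.differentiable_gradient_apply_prodMk_left
  have hWstar := fderiv_eq_neg_symm_comp_fderiv_right (hGdiff _) hWdiff hstat H hH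
  refine ⟨hLA.comp phi0 hWdiff, fun v => ?_⟩
  rw [fderiv_fun_comp phi0 hLA hWdiff, comp_apply, ← inner_gradient_left, hWstar]
  simp [inner_neg_right]
end

section
/- (Proposition 1.) Let L_main, L_aux : ℝ^n → ℝ be twice continuously differentiable, let L_A : ℝ^n → ℝ be differentiable, and define the training loss L_T(W, φ) = L_main(W) + φ·L_aux(W) for φ ∈ ℝ. Suppose W* : ℝ → ℝ^n is differentiable at 0, satisfies ∇L_main(W*(φ)) + φ·∇L_aux(W*(φ)) = 0 for all φ in a neighborhood of 0, and the Hessian H of L_main at W₀ := W*(0) is invertible. Then d/dφ L_A(W*(φ)) at φ = 0 equals −⟨∇L_A(W₀), H⁻¹ ∇L_aux(W₀)⟩; moreover ∇L_main(W₀) = 0, so H⁻¹ ∇L_aux(W₀) equals the Newton update H⁻¹ ∇_W(L_main + L_aux)(W₀) of the training loss with the auxiliary included at weight 1. -/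
/-!
Differentiating the stationarity identity `∇L_main(W*(φ)) + φ ∇L_aux(W*(φ)) = 0` at `φ = 0`
gives `H (W*)'(0) + ∇L_aux(W₀) = 0`, so `(W*)'(0) = -H⁻¹ ∇L_aux(W₀)`, and the chain rule turns
this into the derivative of `L_A ∘ W*`. At `φ = 0` the identity itself says `∇L_main(W₀) = 0`,
which makes `∇(L_main + L_aux)(W₀) = ∇L_aux(W₀)`.
-/

open scoped RealInnerProductSpace Topology
open Filter Asymptotics InnerProductSpace

section Gradient

variable {F : Type*} [NormedAddCommGroup F] [InnerProductSpace ℝ F] [CompleteSpace F]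

theorem ContDiff.gradient {n : WithTop ℕ∞} {f : F → ℝ} (hf : ContDiff ℝ (n + 1) f) :
    ContDiff ℝ n (gradient f) :=
  (toDual ℝ F).symm.toContinuousLinearEquiv.contDiff.comp (hf.fderiv_right le_rfl)

theorem gradient_fun_add {f g : F → ℝ} {x : F} (hf : DifferentiableAt ℝ f x)
    (hg : DifferentiableAt ℝ g x) :
    gradient (fun y => f y + g y) x = gradient f x + gradient g x :=
  (toDual ℝ F).injective <| by
    rw [map_add, toDual_gradient, toDual_gradient, toDual_gradient, fderiv_fun_add hf hg]

theorem HasGradientAt.comp_hasDerivAt {f : F → ℝ} {f' : F} {w : ℝ → F} {w' : F} {t : ℝ}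
    (hf : HasGradientAt f f' (w t)) (hw : HasDerivAt w w' t) :
    HasDerivAt (fun s => f (w s)) ⟪f', w'⟫ t := by
  have := hf.hasFDerivAt.comp_hasDerivAt t hw
  rw [toDual_apply_apply] at this
  exact this

end Gradient

section Implicit

variable {E F : Type*} [NormedAddCommGroup E] [NormedSpace ℝ E]
  [NormedAddCommGroup F] [NormedSpace ℝ F]

theorem hasDerivAt_smul_zero_of_continuousAt {f : ℝ → F} (hf : ContinuousAt f 0) :
    HasDerivAt (fun t => t • f t) (f 0) 0 := by
  refine .of_isLittleO ?_
  have hsmall : (fun t => f t - f 0) =o[𝓝 0] fun _ => (1 : ℝ) :=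
    (isLittleO_one_iff ℝ).2 (tendsto_sub_nhds_zero_iff.2 hf)
  simpa [smul_sub] using (isBigO_refl (fun t : ℝ => t) (𝓝 0)).smul_isLittleO hsmall

theorem fderiv_apply_deriv_add_eq_zero {G A : E → F} {w : ℝ → E}
    (hG : DifferentiableAt ℝ G (w 0)) (hA : ContinuousAt A (w 0)) (hw : DifferentiableAt ℝ w 0)
    (h : ∀ᶠ t in 𝓝 0, G (w t) + t • A (w t) = 0) :
    fderiv ℝ G (w 0) (deriv w 0) + A (w 0) = 0 := by
  have hsum : HasDerivAt (fun t => G (w t) + t • A (w t))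
      (fderiv ℝ G (w 0) (deriv w 0) + A (w 0)) 0 :=
    (hG.hasFDerivAt.comp_hasDerivAt 0 hw.hasDerivAt).add
      (hasDerivAt_smul_zero_of_continuousAt (hA.comp hw.continuousAt))
  exact hsum.unique ((hasDerivAt_const 0 0).congr_of_eventuallyEq h)

end Implicit

/-- Proposition 1: For `L_T(W, φ) = L_main(W) + φ·L_aux(W)` with
stationary-point map `W*` and invertible Hessian `H` of `L_main` at `W₀ = W*(0)`,
`d/dφ L_A(W*(φ))|₀ = −⟨∇L_A(W₀), H⁻¹ ∇L_aux(W₀)⟩`; moreover `∇L_main(W₀) = 0`, so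
`H⁻¹ ∇L_aux(W₀)` equals the Newton update `H⁻¹ ∇(L_main + L_aux)(W₀)`. -/
theorem stmt_4 (n : ℕ)
    (Lmain Laux : EuclideanSpace ℝ (Fin n) → ℝ)
    (LA : EuclideanSpace ℝ (Fin n) → ℝ)
    (hmain : ContDiff ℝ 2 Lmain) (haux : ContDiff ℝ 2 Laux)
    (hLA : Differentiable ℝ LA)
    (Wstar : ℝ → EuclideanSpace ℝ (Fin n))
    (hWdiff : DifferentiableAt ℝ Wstar 0)
    (hstat : ∀ᶠ φ in nhds (0 : ℝ),
      gradient Lmain (Wstar φ) + φ • gradient Laux (Wstar φ) = 0)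
    (H : EuclideanSpace ℝ (Fin n) ≃L[ℝ] EuclideanSpace ℝ (Fin n))
    (hH : (H : EuclideanSpace ℝ (Fin n) →L[ℝ] EuclideanSpace ℝ (Fin n)) =
      fderiv ℝ (gradient Lmain) (Wstar 0)) :
    deriv (fun φ => LA (Wstar φ)) 0 =
      - ⟪gradient LA (Wstar 0), H.symm (gradient Laux (Wstar 0))⟫ ∧
    gradient Lmain (Wstar 0) = 0 ∧
    H.symm (gradient Laux (Wstar 0)) =
      H.symm (gradient (fun W => Lmain W + Laux W) (Wstar 0)) := by
  have hstat₀ : gradient Lmain (Wstar 0) = 0 := by simpa using hstat.self_of_nhds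
  have hlin := fderiv_apply_deriv_add_eq_zero
    ((hmain.gradient (n := 1)).differentiable one_ne_zero _)
    ((haux.gradient (n := 1)).continuous.continuousAt) hWdiff hstat
  have hderiv : deriv Wstar 0 = -H.symm (gradient Laux (Wstar 0)) := by
    apply H.injective
    rw [map_neg, H.apply_symm_apply, ← ContinuousLinearEquiv.coe_coe, hH]
    exact eq_neg_of_add_eq_zero_left hlin
  refine ⟨?_, hstat₀, ?_⟩
  · rw [((hLA _).hasGradientAt.comp_hasDerivAt hWdiff.hasDerivAt).deriv, hderiv, inner_neg_right]
  · rw [gradient_fun_add (hmain.differentiable two_ne_zero _) (haux.differentiable two_ne_zero _),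
      hstat₀, zero_add]
end

section
/- For every n ∈ ℕ there exist n distinct reals x₁, …, xₙ (one may take x_i = 4^{−i}) such that for every labeling y : Fin n → Bool there exists φ ∈ ℝ with: (i) cos(φ·x_i) > 0 ↔ (y_i = true) for all i; and (ii) φ is the unique global minimizer of the regularized training loss w ↦ ℓ01(w) + (φ − w)², where ℓ01(w) = #{i : (cos(w·x_i) > 0) ≠ y_i}. Hence the learned model W*(φ) := argmin_w [ℓ01(w) + (φ − w)²] realizes every Boolean labeling of {x₁, …, xₙ} as φ ranges over ℝ; i.e., the induced hypothesis class H_φ = {x ↦ ⌈cos(W*(φ)·x)⌉ : φ ∈ ℝ} shatters sets of every finite cardinality and has infinite VC dimension. -/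
/-!
Take `x i = 4⁻ⁱ` and, for a labeling `y`, `φ = π N` with `N = ∑_{y j = false} 4ʲ`.
Then `φ x i / π = N / 4ⁱ` is an integer of the parity of `[y i = false]` plus a
fractional part below `1/3` coming from the digits `j < i`, so the sign of `cos (φ x i)`
reads off `y i`. Hence the training loss vanishes at `φ`, and the regularizer
`(φ - w)²` makes `φ` the strict minimizer.
-/

open Real Finset

lemma cos_pi_mul_int_add_pos_iff_even (k : ℤ) {t : ℝ} (ht : |t| < 1 / 2) :
    0 < cos (π * (k + t)) ↔ Even k := by
  have hcos : 0 < cos (π * t) := by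
    apply cos_pos_of_mem_Ioo
    rw [abs_lt] at ht
    constructor <;> nlinarith [pi_pos]
  rw [show π * (k + t) = π * t + k * π by ring, cos_add_int_mul_pi]
  rcases Int.even_or_odd k with hk | hk
  · simp [hk, hk.neg_one_zpow, hcos]
  · simp [hk.neg_one_zpow, Int.not_even_iff_odd.mpr hk, hcos.le]

lemma cos_pi_mul_div_pos_iff_even {d q r : ℕ} (hr : 2 * r < d) :
    0 < cos (π * ((d * q + r : ℕ) : ℝ) / d) ↔ Even q := by
  have hd : (0 : ℝ) < d := by exact_mod_cast (by omega : 0 < d)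
  have ht : |(r : ℝ) / d| < 1 / 2 := by
    rw [abs_of_nonneg (by positivity), div_lt_iff₀ hd]
    have : ((2 * r : ℕ) : ℝ) < d := by exact_mod_cast hr
    push_cast at this
    linarith
  rw [← Int.even_coe_nat, ← cos_pi_mul_int_add_pos_iff_even _ ht]
  push_cast
  field_simp

lemma three_mul_sum_range_mul_four_pow_lt {b : ℕ → ℕ} (hb : ∀ j, b j ≤ 1) (i : ℕ) :
    3 * ∑ j ∈ range i, b j * 4 ^ j < 4 ^ i := by
  induction i with
  | zero => simp
  | succ i ih =>
    rw [sum_range_succ, pow_succ]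
    nlinarith [hb i, pow_pos (by norm_num : 0 < 4) i]

lemma sum_range_mul_pow_eq {R : Type*} [CommSemiring R] (b : ℕ → R) (B : R) (i m : ℕ) :
    ∑ j ∈ range (i + 1 + m), b j * B ^ j =
      B ^ i * (b i + B * ∑ k ∈ range m, b (i + 1 + k) * B ^ k) + ∑ j ∈ range i, b j * B ^ j := by
  rw [sum_range_add, sum_range_succ, mul_add, mul_sum, mul_sum]
  simp only [pow_add]
  ring_nf

lemma cos_pi_mul_sum_div_four_pow_pos_iff {b : ℕ → ℕ} (hb : ∀ j, b j ≤ 1) {i n : ℕ}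
    (hi : i < n) :
    0 < cos (π * ((∑ j ∈ range n, b j * 4 ^ j : ℕ) : ℝ) / (4 : ℝ) ^ i) ↔ b i = 0 := by
  obtain ⟨m, rfl⟩ : ∃ m, n = i + 1 + m := ⟨n - i - 1, by omega⟩
  have hlow := three_mul_sum_range_mul_four_pow_lt hb i
  have hq : Even (b i + 4 * ∑ k ∈ range m, b (i + 1 + k) * 4 ^ k) ↔ b i = 0 := by
    have h4 : Even (4 * ∑ k ∈ range m, b (i + 1 + k) * 4 ^ k) := ⟨2 * _, by ring⟩
    rw [Nat.even_add, iff_true_right h4]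
    have := hb i
    interval_cases b i <;> decide
  rw [sum_range_mul_pow_eq, ← hq,
    ← cos_pi_mul_div_pos_iff_even (d := 4 ^ i) (r := ∑ j ∈ range i, b j * 4 ^ j) (by omega)]
  push_cast
  rfl

lemma add_sq_sub_self_lt_of_eq_zero {ℓ : ℝ → ℝ} (hℓ : ∀ w, 0 ≤ ℓ w) {φ w : ℝ} (hφ : ℓ φ = 0)
    (hw : w ≠ φ) : ℓ φ + (φ - φ) ^ 2 < ℓ w + (φ - w) ^ 2 := by
  have : φ - w ≠ 0 := sub_ne_zero.mpr hw.symm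
  have : 0 < (φ - w) ^ 2 := by positivity
  linarith [hℓ w]

open Classical in
/-- For every `n` there are `n` distinct reals `x₁, …, xₙ` such that
for every labeling `y` there is `φ ∈ ℝ` with (i) `cos(φ·x_i) > 0 ↔ y_i` for all
`i`, and (ii) `φ` is the unique global minimizer of the regularized training loss
`w ↦ ℓ01(w) + (φ − w)²`, where `ℓ01(w) = #{i : (cos(w·x_i) > 0) ≠ y_i}`. Hence the
learned model `W*(φ) = argmin_w [ℓ01(w) + (φ − w)²]` realizes every Boolean
labeling of `{x₁, …, xₙ}`, so the induced class `H_φ` has infinite VC dimension. -/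
theorem stmt_8 (n : ℕ) :
    ∃ x : Fin n → ℝ, Function.Injective x ∧
      ∀ y : Fin n → Bool, ∃ φ : ℝ,
        (∀ i : Fin n, (0 < Real.cos (φ * x i)) ↔ y i = true) ∧
        ∀ w : ℝ, w ≠ φ →
          ((Finset.univ.filter
              (fun i : Fin n => (0 < Real.cos (φ * x i)) ≠ (y i = true))).card : ℝ)
              + (φ - φ) ^ 2
            < ((Finset.univ.filter
              (fun i : Fin n => (0 < Real.cos (w * x i)) ≠ (y i = true))).card : ℝ)
              + (φ - w) ^ 2 := by
  set x : Fin n → ℝ := fun i => ((4 : ℝ) ^ (i : ℕ))⁻¹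
  have hx : Function.Injective x := fun i j hij =>
    Fin.ext (Nat.pow_right_injective (by norm_num : 2 ≤ 4) (by exact_mod_cast inv_injective hij))
  refine ⟨x, hx, fun y => ?_⟩
  let b (j : ℕ) : ℕ := if h : j < n then (!y ⟨j, h⟩).toNat else 0
  have hb : ∀ j, b j ≤ 1 := fun j => by unfold b; split <;> simp [Bool.toNat_le]
  set φ := π * ((∑ j ∈ range n, b j * 4 ^ j : ℕ) : ℝ)
  have hφ : ∀ i, 0 < cos (φ * x i) ↔ y i = true := fun i => by
    rw [← div_eq_mul_inv, cos_pi_mul_sum_div_four_pow_pos_iff hb i.isLt]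
    cases hyi : y i <;> simp [b, hyi]
  refine ⟨φ, hφ, fun w hw => add_sq_sub_self_lt_of_eq_zero
    (ℓ := fun w => (#{i | (0 < cos (w * x i)) ≠ (y i = true)} : ℝ)) (fun _ => Nat.cast_nonneg _) ?_ hw⟩
  simp [hφ]
end
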